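/- arXiv:2204.00268 — 3 statements merged into one kernel-verified Lean document; each statement's English description precedes it below -/
import Mathlib

section
/- Call a play of the knowledge-based game arena G complete if it ends at an agent vertex, and define the induced history of a complete play whose agent vertices are, in order, (x0,q0,K0),(x1,q1,K1),…,(xn,qn,Kn) to be the sequence (x0,o_{K0}(x0))(x1,o_{K1}(x1))⋯(xn,o_{Kn}(xn)). Then for every history ħ of the PK-WTS 𝕋 there exists a unique complete play π_ħ in G whose induced history equals ħ; moreover, cost_G(π_ħ) equals the cost of the path x0 x1 ⋯ xn formed by the state components of ħ. -/
namespace RegretLTL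

/-- A deterministic finite automaton over alphabet `2^AP`. -/
structure DFAut (Q AP : Type) where
  q0 : Q
  f : Q → Finset AP → Q
  QF : Set Q

/-- A partially-known weighted transition system. -/
structure PKWTS (X AP : Type) where
  x0 : X
  Δ : X → Finset (Finset X)
  Δ_nonempty : ∀ x, (Δ x).Nonempty
  w : X → X → ℝ
  w_nonneg : ∀ x y, 0 ≤ w x y
  L : X → Finset AP
  x0_known : (Δ x0).card = 1

variable {X Q AP : Type} [DecidableEq X] [Fintype X] [Fintype Q] [Fintype AP]
  [Inhabited X] [Inhabited Q]

/-- The pattern recorded for `x` in a knowledge-set (junk value `∅` if absent). -/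
def lookupO (K : List (X × Finset X)) (x : X) : Finset X :=
  ((K.find? (fun k => decide (k.1 = x))).map Prod.snd).getD ∅

/-- `x` has been explored in the knowledge-set `K`, i.e. `x ∈ X(K)`. -/
def Explored (K : List (X × Finset X)) (x : X) : Prop := ∃ o, (x, o) ∈ K

/-- Knowledge-set update. -/
def kupdate (K : List (X × Finset X)) (κ : X × Finset X) : List (X × Finset X) :=
  if K.any (fun k => decide (k.1 = κ.1)) then K else K ++ [κ]

variable (M : PKWTS X AP) (D : DFAut Q AP) (K0 : List (X × Finset X))

/-- `K0` is the initial knowledge-set: it lists (in some fixed order) each known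
state together with its unique successor pattern. -/
def IsInitK : Prop :=
  (K0.map Prod.fst).Nodup ∧ (∀ p ∈ K0, M.Δ p.1 = {p.2}) ∧
    ∀ x : X, (M.Δ x).card = 1 → ∃ o, (x, o) ∈ K0

/-- A compatible environment `T ∈ 𝕋`, given by its transition function. -/
def CompatEnv := { δ : X → Finset X // ∀ x, δ x ∈ M.Δ x }

/-- A finite path of the environment with transition function `δ`, starting at `x0`. -/
def IsEnvPath (δ : X → Finset X) (ρ : List X) : Prop :=
  ρ ≠ [] ∧ ρ.head? = some M.x0 ∧ ρ.Chain' (fun a b => b ∈ δ a)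

/-- Cost of a finite path. -/
def costP (ρ : List X) : ℝ := (List.zipWith M.w ρ ρ.tail).sum

/-- Run of the DFA on the labels of a sequence of states. -/
def frun (q : Q) (xs : List X) : Q := xs.foldl (fun q x => D.f q (M.L x)) q

/-- The finite path `ρ = x0 x1 ⋯ xn` accomplishes the task:
`f(q0, L(x0)⋯L(x_{n-1})) ∈ QF`. -/
def Accomplishes (ρ : List X) : Prop :=
  ρ ≠ [] ∧ frun M D D.q0 ρ.dropLast ∈ D.QF

/-- A history of the PK-WTS. -/
def IsHistory (h : List (X × Finset X)) : Prop :=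
  h ≠ [] ∧ (h.map Prod.fst).head? = some M.x0 ∧
  (∀ p ∈ h, p.2 ∈ M.Δ p.1) ∧
  h.Chain' (fun p p' => p'.1 ∈ p.2) ∧
  ∀ p ∈ h, ∀ p' ∈ h, p.1 = p'.1 → p.2 = p'.2

/-- Validity of a strategy for the PK-WTS: it moves to a successor in the last
observed pattern, or stops. -/
def XiValid (ξ : List (X × Finset X) → Option X) : Prop :=
  ∀ h p x, IsHistory M h → h.getLast? = some p → ξ h = some x → x ∈ p.2

/-- The history induced from a path in a fixed environment. -/
def histOf (δ : X → Finset X) (ρ : List X) : List (X × Finset X) :=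
  ρ.map (fun x => (x, δ x))

/-- `ρ` is the outcome path `ρ^T_ξ` of strategy `ξ` in environment `δ`. -/
def IsOutcomePath (ξ : List (X × Finset X) → Option X) (δ : X → Finset X)
    (ρ : List X) : Prop :=
  IsEnvPath M δ ρ ∧
  (∀ i (h : i + 1 < ρ.length),
    ξ (histOf δ (ρ.take (i+1))) = some (ρ[i+1]'h)) ∧
  ξ (histOf δ ρ) = none

open Classical in
/-- The outcome path `ρ^T_ξ` (junk `[]` if it does not exist). -/
noncomputable def outcomePath (ξ : List (X × Finset X) → Option X)
    (T : CompatEnv M) : List X :=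
  if h : ∃ ρ, IsOutcomePath M ξ T.1 ρ then h.choose else []

/-- `Stra_A(𝕋)`: strategies whose outcome path exists and accomplishes the task in
every compatible environment. -/
def StraA : Set (List (X × Finset X) → Option X) :=
  { ξ | XiValid M ξ ∧
      ∀ T : CompatEnv M, ∃ ρ, IsOutcomePath M ξ T.1 ρ ∧ Accomplishes M D ρ }

/-- The regret of a strategy `ξ` in the partially-known environment `𝕋`. -/
noncomputable def regT (ξ : List (X × Finset X) → Option X) : ℝ :=
  sSup { r | ∃ T : CompatEnv M,
    costP M (outcomePath M ξ T) -
      sInf { c | ∃ ξ' ∈ StraA M D, costP M (outcomePath M ξ' T) = c } = r }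

/-- Vertices of the knowledge-based game arena. -/
inductive Vtx (X Q : Type) where
  | ag (x : X) (q : Q) (K : List (X × Finset X))
  | env (x : X) (q : Q) (K : List (X × Finset X)) (xh : X)

instance : Inhabited (Vtx X Q) := ⟨.ag default default []⟩

def IsAgV : Vtx X Q → Prop
  | .ag _ _ _ => True
  | _ => False

def IsEnvV : Vtx X Q → Prop
  | .env _ _ _ _ => True
  | _ => False

/-- Knowledge-set component of a vertex. -/
def Kof : Vtx X Q → List (X × Finset X)
  | .ag _ _ K => K
  | .env _ _ K _ => K

/-- The fourth (target-state) component of an environment vertex. -/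
def tgtOf : Vtx X Q → Option X
  | .env _ _ _ xh => some xh
  | _ => none

/-- Edges of the knowledge-based game arena. -/
def Edge : Vtx X Q → Vtx X Q → Prop
  | .ag x q K, .env x' q' K' xh =>
      x' = x ∧ q' = q ∧ K' = K ∧ Explored K x ∧ xh ∈ lookupO K x
  | .env xe qe Ke xh, .ag xa qa Ka =>
      xa = xh ∧ qa = D.f qe (M.L xe) ∧ ∃ o ∈ M.Δ xa, Ka = kupdate Ke (xa, o)
  | _, _ => False

/-- Initial vertex of the arena. -/
def v0 : Vtx X Q := .ag M.x0 D.q0 K0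

/-- Weight function of the arena. -/
def wG : Vtx X Q → Vtx X Q → ℝ
  | .env xe _ _ _, .ag xa _ _ => M.w xe xa
  | _, _ => 0

/-- A play: a finite directed path in the arena starting at `v0`. -/
def IsPlay (π : List (Vtx X Q)) : Prop :=
  π.head? = some (v0 M D K0) ∧ π.Chain' (Edge M D)

/-- Cost of a play. -/
def costG (π : List (Vtx X Q)) : ℝ := (List.zipWith (wG M) π π.tail).sum

/-- Accepting (final) vertices `V_F`. -/
def InVF : Vtx X Q → Prop
  | Vtx.ag _ q _ => q ∈ D.QF
  | _ => False

/-- Validity of an agent strategy: along plays ending at an agent vertex, it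
either stops or moves along an edge of the arena. -/
def AValid (σa : List (Vtx X Q) → Option (Vtx X Q)) : Prop :=
  ∀ π u v, IsPlay M D K0 π → π.getLast? = some u → IsAgV u → σa π = some v →
    Edge M D u v

/-- Validity of a (positional) environment strategy: it moves along edges of the
arena, and it reveals the same successor pattern whenever the same unexplored
state is entered. This defines membership in `𝔖_e`. -/
def EValid (σe : Vtx X Q → Vtx X Q) : Prop :=
  (∀ v, IsEnvV v → Edge M D v (σe v)) ∧
  (∀ (x : X) (q : Q) (K : List (X × Finset X)) (x' : X) (q' : Q)
      (K' : List (X × Finset X)) (xh : X),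
    ¬ Explored K xh → ¬ Explored K' xh →
    lookupO (Kof (σe (.env x q K xh))) xh = lookupO (Kof (σe (.env x' q' K' xh))) xh)

/-- The set `𝔖_e` of environment strategies. -/
def SE : Set (Vtx X Q → Vtx X Q) := { σe | EValid M D σe }

/-- `π` is the outcome play `π_{σa,σe}`. -/
def IsOutcome (σa : List (Vtx X Q) → Option (Vtx X Q)) (σe : Vtx X Q → Vtx X Q)
    (π : List (Vtx X Q)) : Prop :=
  IsPlay M D K0 π ∧
  (∀ i (h : i + 1 < π.length),
    (IsAgV (π[i]'(Nat.lt_of_succ_lt h)) → σa (π.take (i+1)) = some (π[i+1]'h)) ∧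
    (IsEnvV (π[i]'(Nat.lt_of_succ_lt h)) → σe (π[i]'(Nat.lt_of_succ_lt h)) = π[i+1]'h)) ∧
  IsAgV π.getLast! ∧ σa π = none

open Classical in
/-- The outcome play `π_{σa,σe}` (junk `[]` if it does not exist). -/
noncomputable def outcome (σa : List (Vtx X Q) → Option (Vtx X Q))
    (σe : Vtx X Q → Vtx X Q) : List (Vtx X Q) :=
  if h : ∃ π, IsOutcome M D K0 σa σe π then h.choose else []

/-- The set `𝔖_a` of winning agent strategies. -/
def SA : Set (List (Vtx X Q) → Option (Vtx X Q)) :=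
  { σa | AValid M D K0 σa ∧
      ∀ σe ∈ SE M D, ∃ π, IsOutcome M D K0 σa σe π ∧ InVF D π.getLast! }

/-- `min_{σa' ∈ 𝔖_a} cost_G(π_{σa',σe})`. -/
noncomputable def bestCost (σe : Vtx X Q → Vtx X Q) : ℝ :=
  sInf { c | ∃ σa ∈ SA M D K0, costG M (outcome M D K0 σa σe) = c }

/-- The regret `reg_G^{σe}(σa)` of `σa` against `σe`. -/
noncomputable def regAgainst (σa : List (Vtx X Q) → Option (Vtx X Q))
    (σe : Vtx X Q → Vtx X Q) : ℝ :=
  costG M (outcome M D K0 σa σe) - bestCost M D K0 σe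

/-- The regret `reg_G(σa)`. -/
noncomputable def regG (σa : List (Vtx X Q) → Option (Vtx X Q)) : ℝ :=
  sSup { r | ∃ σe ∈ SE M D, regAgainst M D K0 σa σe = r }

/-- Positional agent strategies. -/
def PositionalA (σa : List (Vtx X Q) → Option (Vtx X Q)) : Prop :=
  ∀ π π' : List (Vtx X Q), π.getLast? = π'.getLast? → σa π = σa π'

/-- `T ∈ 𝕋_K`. -/
def InTK (K : List (X × Finset X)) (T : CompatEnv M) : Prop :=
  ∀ p ∈ K, T.1 p.1 = p.2

/-- Best response `br(K)`. -/
noncomputable def br (K : List (X × Finset X)) : ℝ :=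
  sInf { c | ∃ T : CompatEnv M, InTK M K T ∧
    ∃ ρ, IsEnvPath M T.1 ρ ∧ Accomplishes M D ρ ∧ costP M ρ = c }

/-- Minimum cost of a play from `v0` to `v`. -/
noncomputable def SPcost (v : Vtx X Q) : ℝ :=
  sInf { c | ∃ π, IsPlay M D K0 π ∧ π.getLast? = some v ∧ costG M π = c }

/-- The edge `(u,v)` occurs on the play `π`. -/
def EdgeOn (u v : Vtx X Q) (π : List (Vtx X Q)) : Prop := (u, v) ∈ π.zip π.tail

/-- `(u,v) ∈ E_SP`: `(u,v)` lies on a minimum-cost play from `v0` to `V_F`. -/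
def inESP (u v : Vtx X Q) : Prop :=
  ∃ π vf, IsPlay M D K0 π ∧ π.getLast? = some vf ∧ InVF D vf ∧
    costG M π = SPcost M D K0 vf ∧ EdgeOn u v π

open Classical in
/-- The modified weight function `μ`, with values in `EReal`. -/
noncomputable def mu (u v : Vtx X Q) : EReal :=
  if IsEnvV u ∧ IsAgV v then
    (if inESP M D K0 u v then
      (if InVF D v then (((SPcost M D K0 v - br M D (Kof v) : ℝ)) : EReal) else 0)
     else ⊤)
  else 0

/-- Cost of a play with respect to `μ`. -/
noncomputable def costMu (π : List (Vtx X Q)) : EReal :=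
  (List.zipWith (mu M D K0) π π.tail).sum

open Classical in
/-- `Val^μ(σa)`. -/
noncomputable def Valmu (σa : List (Vtx X Q) → Option (Vtx X Q)) : EReal :=
  if AValid M D K0 σa ∧
     (∀ σe ∈ SE M D, ∃ π, IsOutcome M D K0 σa σe π ∧ InVF D π.getLast!)
  then sSup { c : EReal | ∃ σe ∈ SE M D, costMu M D K0 (outcome M D K0 σa σe) = c }
  else ⊤

/-- The environment strategy `σ_e^T` induced by a compatible environment `T`. -/
def envOf (T : CompatEnv M) : Vtx X Q → Vtx X Q
  | .env x q K xh => .ag xh (D.f q (M.L x)) (kupdate K (xh, T.1 xh))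
  | v => v

/-- Best responses are achievable: for every compatible `T`, the best cost against
`σ_e^T` in the arena equals the minimum cost of a path of `T` accomplishing the task. -/
def BRAchievable : Prop :=
  ∀ T : CompatEnv M,
    bestCost M D K0 (envOf M D T) =
      sInf { c | ∃ ρ, IsEnvPath M T.1 ρ ∧ Accomplishes M D ρ ∧ costP M ρ = c }

/-- The sequence of `X`-components of the agent vertices of a play. -/
def agentStates (π : List (Vtx X Q)) : List X :=
  π.filterMap (fun v => match v with | .ag x _ _ => some x | _ => none)

/-- The history induced by a complete play. -/
def inducedHist (π : List (Vtx X Q)) : List (X × Finset X) :=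
  π.filterMap (fun v => match v with | .ag x _ K => some (x, lookupO K x) | _ => none)

/-- A branching environment vertex: at least two outgoing edges. -/
def Branching (v : Vtx X Q) : Prop :=
  IsEnvV v ∧ ∃ u1 u2, u1 ≠ u2 ∧ Edge M D v u1 ∧ Edge M D v u2

open Classical in
/-- The sublist of branching environment vertices of a play, in order. -/
noncomputable def branchList (π : List (Vtx X Q)) : List (Vtx X Q) :=
  π.filter (fun v => decide (Branching M D v))



section Aux

/-- Lookup in a knowledge-set with nodup keys. -/
lemma lookupO_eq_of_mem {K : List (X × Finset X)} {x : X} {o : Finset X}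
    (hnd : (K.map Prod.fst).Nodup) (hm : (x, o) ∈ K) : lookupO K x = o := by
  induction K with
  | nil => simp at hm
  | cons a t ih =>
    rw [List.map_cons, List.nodup_cons] at hnd
    rcases List.mem_cons.1 hm with hEq | hmem
    · subst hEq
      simp [lookupO, List.find?]
    · have hne : a.1 ≠ x := by
        intro he
        exact hnd.1 (he ▸ (List.mem_map.2 ⟨(x, o), hmem, rfl⟩))
      have : lookupO (a :: t) x = lookupO t x := by
        simp [lookupO, List.find?, hne]
      rw [this]; exact ih hnd.2 hmem

lemma explored_iff_any (K : List (X × Finset X)) (x : X) :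
    Explored K x ↔ K.any (fun k => decide (k.1 = x)) = true := by
  simp only [List.any_eq_true, decide_eq_true_eq, Explored]
  constructor
  · rintro ⟨o, ho⟩; exact ⟨(x, o), ho, rfl⟩
  · rintro ⟨k, hk, hEq⟩; exact ⟨k.2, by rw [← hEq]; exact hk⟩

lemma kupdate_of_explored {K : List (X × Finset X)} {x : X} (o : Finset X)
    (hx : Explored K x) : kupdate K (x, o) = K := by
  simp [kupdate, (explored_iff_any K x).1 hx]

lemma kupdate_of_not_explored {K : List (X × Finset X)} {x : X} (o : Finset X)
    (hx : ¬ Explored K x) : kupdate K (x, o) = K ++ [(x, o)] := by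
  have : ¬ (K.any (fun k => decide (k.1 = x)) = true) := fun hc =>
    hx ((explored_iff_any K x).2 hc)
  simp [kupdate, this]

lemma lookupO_append_new {K : List (X × Finset X)} {x : X} (o : Finset X)
    (hx : ¬ Explored K x) : lookupO (K ++ [(x, o)]) x = o := by
  induction K with
  | nil => simp [lookupO, List.find?]
  | cons a t ih =>
    have hne : a.1 ≠ x := fun he => hx ⟨a.2, by rw [← he]; exact List.mem_cons_self⟩
    have hx' : ¬ Explored t x := fun ⟨o', ho'⟩ => hx ⟨o', List.mem_cons_of_mem a ho'⟩
    have : lookupO ((a :: t) ++ [(x, o)]) x = lookupO (t ++ [(x, o)]) x := by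
      simp [lookupO, List.find?, hne]
    rw [this]; exact ih hx'

lemma nodup_kupdate {K : List (X × Finset X)} (p : X × Finset X)
    (hnd : (K.map Prod.fst).Nodup) : ((kupdate K p).map Prod.fst).Nodup := by
  obtain ⟨a, b⟩ := p
  by_cases hx : Explored K a
  · rw [kupdate_of_explored b hx]
    exact hnd
  · rw [kupdate_of_not_explored b hx]
    rw [List.map_append, List.nodup_append]
    refine ⟨hnd, List.nodup_singleton _, ?_⟩
    intro y hy z hz hyz
    simp only [List.map_cons, List.map_nil, List.mem_singleton] at hz
    subst hz hyz
    rcases List.mem_map.1 hy with ⟨k, hk, hk1⟩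
    exact hx ⟨k.2, by rw [← hk1]; exact hk⟩

/-- The canonical play built from a start vertex and the tail of a history. -/
def mkPlay (x : X) (q : Q) (K : List (X × Finset X)) :
    List (X × Finset X) → List (Vtx X Q)
  | [] => [.ag x q K]
  | (x', o') :: t => .ag x q K :: .env x q K x' ::
      mkPlay x' (D.f q (M.L x)) (kupdate K (x', o')) t

lemma mkPlay_cons (t : List (X × Finset X)) (x : X) (q : Q)
    (K : List (X × Finset X)) :
    ∃ l, mkPlay M D x q K t = .ag x q K :: l := by
  cases t with
  | nil => exact ⟨[], rfl⟩
  | cons p t' => exact ⟨_, rfl⟩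

lemma mkPlay_last (t : List (X × Finset X)) : ∀ (x : X) (q : Q)
    (K : List (X × Finset X)), IsAgV (mkPlay M D x q K t).getLast! := by
  induction t with
  | nil => intro x q K; simp [mkPlay, List.getLast!, IsAgV]
  | cons p t' ih =>
    intro x q K
    obtain ⟨l, hl⟩ := mkPlay_cons M D t' p.1 (D.f q (M.L x)) (kupdate K p)
    have h1 : mkPlay M D x q K (p :: t')
        = .ag x q K :: .env x q K p.1 :: mkPlay M D p.1 (D.f q (M.L x)) (kupdate K p) t' := rfl
    rw [h1, hl]
    have h2 : (Vtx.ag x q K :: Vtx.env x q K p.1 :: Vtx.ag p.1 (D.f q (M.L x)) (kupdate K p) :: l).getLast!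
        = (Vtx.ag p.1 (D.f q (M.L x)) (kupdate K p) :: l).getLast! := rfl
    rw [h2, ← hl]
    exact ih p.1 (D.f q (M.L x)) (kupdate K p)

lemma mkPlay_spec (t : List (X × Finset X)) : ∀ (x : X) (q : Q)
    (K : List (X × Finset X)) (o : Finset X),
    (K.map Prod.fst).Nodup → (x, o) ∈ K →
    (∀ p ∈ t, p.2 ∈ M.Δ p.1) →
    ((x, o) :: t).Chain' (fun p p' => p'.1 ∈ p.2) →
    (∀ p ∈ t, ∀ k ∈ K, p.1 = k.1 → p.2 = k.2) →
    (∀ p ∈ t, ∀ p' ∈ t, p.1 = p'.1 → p.2 = p'.2) →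
    (mkPlay M D x q K t).Chain' (Edge M D) ∧
    inducedHist (mkPlay M D x q K t) = (x, o) :: t ∧
    costG M (mkPlay M D x q K t) = costP M (x :: t.map Prod.fst) := by
  induction t with
  | nil =>
    intro x q K o hnd hm _ _ _ _
    refine ⟨by exact List.isChain_singleton _, ?_, by simp [mkPlay, costG, costP]⟩
    simp [mkPlay, inducedHist, lookupO_eq_of_mem hnd hm]
  | cons p t' ih =>
    intro x q K o hnd hm hΔ hch hcons hint
    obtain ⟨x', o'⟩ := p
    have hx'o : x' ∈ o := (List.isChain_cons_cons.1 hch).1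
    have ho'Δ : o' ∈ M.Δ x' := hΔ (x', o') (List.mem_cons_self)
    set q2 := D.f q (M.L x) with hq2
    set K2 := kupdate K (x', o') with hK2
    have hmem2 : (x', o') ∈ K2 := by
      by_cases hx : Explored K x'
      · obtain ⟨oo, hoo⟩ := hx
        have : o' = oo := hcons (x', o') (List.mem_cons_self) (x', oo) hoo rfl
        rw [hK2, kupdate_of_explored o' ⟨oo, hoo⟩, this]; exact hoo
      · rw [hK2, kupdate_of_not_explored o' hx]
        exact List.mem_append_right _ (List.mem_singleton.2 rfl)
    have hnd2 : (K2.map Prod.fst).Nodup := nodup_kupdate (x', o') hnd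
    have hK2mem : ∀ k ∈ K2, k ∈ K ∨ k = (x', o') := by
      intro k hk
      by_cases hx : Explored K x'
      · left; rwa [hK2, kupdate_of_explored o' hx] at hk
      · rw [hK2, kupdate_of_not_explored o' hx] at hk
        rcases List.mem_append.1 hk with h1 | h1
        · exact Or.inl h1
        · exact Or.inr (List.mem_singleton.1 h1)
    obtain ⟨hchain', hhist', hcost'⟩ := ih x' q2 K2 o' hnd2 hmem2
      (fun p hp => hΔ p (List.mem_cons_of_mem _ hp))
      (List.isChain_cons_cons.1 hch).2
      (by
        intro p hp k hk h1
        rcases hK2mem k hk with hkK | hkE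
        · exact hcons p (List.mem_cons_of_mem _ hp) k hkK h1
        · subst hkE
          exact hint p (List.mem_cons_of_mem _ hp) (x', o') (List.mem_cons_self) h1)
      (fun p hp p' hp' => hint p (List.mem_cons_of_mem _ hp) p' (List.mem_cons_of_mem _ hp'))
    obtain ⟨l, hl⟩ := mkPlay_cons M D t' x' q2 K2
    have hunfold : mkPlay M D x q K ((x', o') :: t')
        = .ag x q K :: .env x q K x' :: mkPlay M D x' q2 K2 t' := rfl
    refine ⟨?_, ?_, ?_⟩
    · rw [hunfold, hl]; unfold List.Chain'; rw [List.isChain_cons_cons, List.isChain_cons_cons]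
      rw [hl] at hchain'
      refine ⟨?_, ?_, hchain'⟩
      · exact ⟨rfl, rfl, rfl, ⟨o, hm⟩, by rwa [lookupO_eq_of_mem hnd hm]⟩
      · exact ⟨rfl, rfl, o', ho'Δ, rfl⟩
    · rw [hunfold]
      simp only [inducedHist, List.filterMap_cons] at hhist' ⊢
      rw [hhist', lookupO_eq_of_mem hnd hm]
    · rw [hunfold, hl]
      rw [hl] at hcost'
      simp only [costG, List.zipWith_cons_cons, List.tail_cons, List.sum_cons] at hcost' ⊢
      simp only [costP, List.map_cons, List.zipWith_cons_cons, List.tail_cons,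
        List.sum_cons, wG]
      rw [hcost']
      simp [costP, wG]

lemma play_eq_mkPlay (t : List (X × Finset X)) : ∀ (π : List (Vtx X Q)) (x : X)
    (q : Q) (K : List (X × Finset X)),
    π.Chain' (Edge M D) → π.head? = some (.ag x q K) → IsAgV π.getLast! →
    inducedHist π = (x, lookupO K x) :: t → π = mkPlay M D x q K t := by
  induction t with
  | nil =>
    intro π x q K hch hhd hlast hhist
    obtain ⟨π1, rfl⟩ : ∃ π1, π = .ag x q K :: π1 := by
      cases π with
      | nil => simp at hhd
      | cons a π1 => exact ⟨π1, by simp at hhd; rw [hhd]⟩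
    cases π1 with
    | nil => rfl
    | cons v π2 =>
      exfalso
      have hedge : Edge M D (.ag x q K) v := (List.isChain_cons_cons.1 hch).1
      obtain ⟨xh, rfl⟩ : ∃ xh, v = .env x q K xh := by
        cases v with
        | ag _ _ _ => exact hedge.elim
        | env a b c d =>
          obtain ⟨h1, h2, h3, -, -⟩ := hedge
          exact ⟨d, by rw [h1, h2, h3]⟩
      cases π2 with
      | nil => exact hlast
      | cons u π3 =>
        have hedge2 : Edge M D (.env x q K xh) u :=
          (List.isChain_cons_cons.1 (List.isChain_cons_cons.1 hch).2).1
        obtain ⟨Ka, rfl⟩ : ∃ Ka, u = .ag xh (D.f q (M.L x)) Ka := by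
          cases u with
          | env _ _ _ _ => exact hedge2.elim
          | ag xa qa Ka =>
            obtain ⟨h1, h2, -⟩ := hedge2
            exact ⟨Ka, by rw [h1, h2]⟩
        simp [inducedHist] at hhist
  | cons p t' ih =>
    intro π x q K hch hhd hlast hhist
    obtain ⟨π1, rfl⟩ : ∃ π1, π = .ag x q K :: π1 := by
      cases π with
      | nil => simp at hhd
      | cons a π1 => exact ⟨π1, by simp at hhd; rw [hhd]⟩
    cases π1 with
    | nil => simp [inducedHist] at hhist
    | cons v π2 =>
      have hedge : Edge M D (.ag x q K) v := (List.isChain_cons_cons.1 hch).1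
      obtain ⟨xh, rfl⟩ : ∃ xh, v = .env x q K xh := by
        cases v with
        | ag _ _ _ => exact hedge.elim
        | env a b c d =>
          obtain ⟨h1, h2, h3, -, -⟩ := hedge
          exact ⟨d, by rw [h1, h2, h3]⟩
      cases π2 with
      | nil => exact hlast.elim
      | cons u π3 =>
        have hedge2 : Edge M D (.env x q K xh) u :=
          (List.isChain_cons_cons.1 (List.isChain_cons_cons.1 hch).2).1
        obtain ⟨Ka, oo, hooΔ, hKa, rfl⟩ : ∃ Ka oo, oo ∈ M.Δ xh ∧
            Ka = kupdate K (xh, oo) ∧ u = .ag xh (D.f q (M.L x)) Ka := by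
          cases u with
          | env _ _ _ _ => exact hedge2.elim
          | ag xa qa Ka =>
            obtain ⟨h1, h2, oo, hoo, hKa⟩ := hedge2
            exact ⟨Ka, oo, by rw [← h1]; exact hoo, by rw [← h1]; exact hKa, by rw [h1, h2]⟩
        have hhist2 : inducedHist (Vtx.ag x q K :: Vtx.env x q K xh ::
            Vtx.ag xh (D.f q (M.L x)) Ka :: π3)
            = (x, lookupO K x) :: (xh, lookupO Ka xh) :: inducedHist π3 := by
          simp [inducedHist]
        rw [hhist2, List.cons.injEq, List.cons.injEq] at hhist
        obtain ⟨-, hp, ht'⟩ := hhist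
        have hKup : kupdate K (xh, lookupO Ka xh) = Ka := by
          by_cases hx : Explored K xh
          · rw [kupdate_of_explored _ hx, hKa, kupdate_of_explored _ hx]
          · rw [hKa] at *
            rw [kupdate_of_not_explored _ hx, kupdate_of_not_explored _ hx,
              lookupO_append_new _ hx]
        have hlast3 : IsAgV (Vtx.ag xh (D.f q (M.L x)) Ka :: π3).getLast! := hlast
        have hrec := ih (Vtx.ag xh (D.f q (M.L x)) Ka :: π3) xh (D.f q (M.L x)) Ka
          (List.isChain_cons_cons.1 (List.isChain_cons_cons.1 hch).2).2
          rfl hlast3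
          (by rw [show inducedHist (Vtx.ag xh (D.f q (M.L x)) Ka :: π3)
                = (xh, lookupO Ka xh) :: inducedHist π3 by simp [inducedHist], ht'])
        subst hp
        have hunfold : mkPlay M D x q K ((xh, lookupO Ka xh) :: t')
            = .ag x q K :: .env x q K xh ::
              mkPlay M D xh (D.f q (M.L x)) (kupdate K (xh, lookupO Ka xh)) t' := rfl
        rw [hunfold, hKup, hrec]

end Aux

/-- every history of the PK-WTS is the induced history of a unique
complete play of the arena, and the cost of this play equals the cost of the
path formed by the state components of the history. -/
theorem unique_complete_play_of_history
    (hinit : IsInitK M K0)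
    (h : List (X × Finset X)) (hh : IsHistory M h) :
    (∃! π : List (Vtx X Q),
      IsPlay M D K0 π ∧ IsAgV π.getLast! ∧ inducedHist π = h) ∧
    ∀ π : List (Vtx X Q),
      IsPlay M D K0 π ∧ IsAgV π.getLast! ∧ inducedHist π = h →
      costG M π = costP M (h.map Prod.fst) := by
  obtain ⟨hne, hhd, hΔ, hch, hint⟩ := hh
  obtain ⟨p, t, rfl⟩ : ∃ p t, h = p :: t := by
    cases h with
    | nil => exact absurd rfl hne
    | cons p t => exact ⟨p, t, rfl⟩
  obtain ⟨x1, o1⟩ := p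
  have hx1 : x1 = M.x0 := by simpa using hhd
  subst hx1
  obtain ⟨hndK0, hK0Δ, hK0known⟩ := hinit
  obtain ⟨oK, hoK⟩ := hK0known M.x0 M.x0_known
  have hΔx0 : M.Δ M.x0 = {oK} := hK0Δ (M.x0, oK) hoK
  have ho1 : o1 = oK := by
    have := hΔ (M.x0, o1) (List.mem_cons_self)
    rw [hΔx0, Finset.mem_singleton] at this
    exact this
  have hoK2 : (M.x0, o1) ∈ K0 := by rw [ho1]; exact hoK
  have hcons : ∀ p ∈ t, ∀ k ∈ K0, p.1 = k.1 → p.2 = k.2 := by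
    intro p hp k hk h1
    have h2 := hΔ p (List.mem_cons_of_mem _ hp)
    rw [h1, hK0Δ k hk, Finset.mem_singleton] at h2
    exact h2
  have hint' : ∀ p ∈ t, ∀ p' ∈ t, p.1 = p'.1 → p.2 = p'.2 := fun p hp p' hp' =>
    hint p (List.mem_cons_of_mem _ hp) p' (List.mem_cons_of_mem _ hp')
  obtain ⟨hchain, hhist, hcost⟩ := mkPlay_spec M D t M.x0 D.q0 K0 o1 hndK0 hoK2
    (fun p hp => hΔ p (List.mem_cons_of_mem _ hp)) hch hcons hint'
  obtain ⟨l, hl⟩ := mkPlay_cons M D t M.x0 D.q0 K0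
  have hlookup : lookupO K0 M.x0 = o1 := lookupO_eq_of_mem hndK0 hoK2
  have huniq : ∀ π : List (Vtx X Q),
      IsPlay M D K0 π ∧ IsAgV π.getLast! ∧ inducedHist π = (M.x0, o1) :: t →
      π = mkPlay M D M.x0 D.q0 K0 t := by
    rintro π ⟨⟨hπhd, hπch⟩, hπlast, hπhist⟩
    exact play_eq_mkPlay M D t π M.x0 D.q0 K0 hπch hπhd hπlast
      (by rw [hπhist, hlookup])
  constructor
  · refine ⟨mkPlay M D M.x0 D.q0 K0 t, ⟨⟨?_, hchain⟩, mkPlay_last M D t M.x0 D.q0 K0, hhist⟩, huniq⟩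
    rw [hl]; rfl
  · intro π hπ
    rw [huniq π hπ, hcost]
    rfl


end RegretLTL
end

section
/- Let G be a finite directed graph with a nonnegative real weight on each edge, let v0 be a vertex, and let F be a set of vertices. Let E_SP be the set of edges that lie on at least one minimum-weight directed path from v0 to some vertex of F. If π is a directed path starting at v0 all of whose edges belong to E_SP, then the total weight of π equals the minimum weight of a directed path from v0 to the last vertex of π. -/
namespace ShortestPathEdges

variable {V : Type}

/-- A directed path in the graph `(V,E)` starting at `v0`. -/
def IsPathFrom (E : V → V → Prop) (v0 : V) (π : List V) : Prop :=
  π.head? = some v0 ∧ π.Chain' E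

/-- Total weight of a path. -/
def pathWeight (w : V → V → ℝ) (π : List V) : ℝ :=
  (List.zipWith w π π.tail).sum

/-- The minimum weight of a directed path from `v0` to `v`. -/
noncomputable def dist (E : V → V → Prop) (w : V → V → ℝ) (v0 v : V) : ℝ :=
  sInf { c | ∃ π, IsPathFrom E v0 π ∧ π.getLast? = some v ∧ pathWeight w π = c }

/-- `(u,v)` lies on at least one minimum-weight directed path from `v0` to some
vertex of `F`. -/
def InESP (E : V → V → Prop) (w : V → V → ℝ) (v0 : V) (F : Set V)
    (u v : V) : Prop :=
  ∃ π vf, IsPathFrom E v0 π ∧ π.getLast? = some vf ∧ vf ∈ F ∧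
    pathWeight w π = dist E w v0 vf ∧ (u, v) ∈ π.zip π.tail

/- ### Auxiliary lemmas -/

lemma pw_nil (w : V → V → ℝ) : pathWeight w ([] : List V) = 0 := by
  simp [pathWeight]

lemma pw_single (w : V → V → ℝ) (a : V) : pathWeight w [a] = 0 := by
  simp [pathWeight]

lemma pw_cons (w : V → V → ℝ) (a b : V) (l : List V) :
    pathWeight w (a :: b :: l) = w a b + pathWeight w (b :: l) := by
  simp [pathWeight]

lemma pw_nonneg (w : V → V → ℝ) (hw : ∀ u v, 0 ≤ w u v) :
    ∀ π : List V, 0 ≤ pathWeight w π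
  | [] => by simp [pw_nil]
  | [a] => by simp [pw_single]
  | a :: b :: l => by
      rw [pw_cons]
      exact add_nonneg (hw a b) (pw_nonneg w hw (b :: l))

lemma pw_split (w : V → V → ℝ) :
    ∀ (l₁ : List V) (x : V) (l₂ : List V),
      pathWeight w (l₁ ++ x :: l₂) = pathWeight w (l₁ ++ [x]) + pathWeight w (x :: l₂)
  | [], x, l₂ => by simp [pw_single]
  | [a], x, l₂ => by simp [pw_cons, pw_single]
  | a :: b :: l₁, x, l₂ => by
      have h := pw_split w (b :: l₁) x l₂
      simp only [List.cons_append, pw_cons] at *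
      rw [h]; ring

lemma mem_zip_tail_of_eq (u v : V) :
    ∀ (l₁ l₂ : List V), (u, v) ∈ (l₁ ++ u :: v :: l₂).zip (l₁ ++ u :: v :: l₂).tail
  | [], l₂ => by simp [List.zip]
  | a :: l₁, l₂ => by
      have h := mem_zip_tail_of_eq u v l₁ l₂
      cases hl : l₁ ++ u :: v :: l₂ with
      | nil => simp at hl
      | cons b t =>
          rw [hl] at h
          simp only [List.cons_append, hl, List.tail_cons, List.zip_cons_cons]
          exact List.mem_cons_of_mem _ h

lemma eq_of_mem_zip_tail {u v : V} :
    ∀ {l : List V}, (u, v) ∈ l.zip l.tail → ∃ l₁ l₂, l = l₁ ++ u :: v :: l₂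
  | [], h => by simp [List.zip] at h
  | [a], h => by simp [List.zip] at h
  | a :: b :: t, h => by
      rw [List.tail_cons, List.zip_cons_cons, List.mem_cons] at h
      rcases h with h | h
      · rw [Prod.mk.injEq] at h
        obtain ⟨rfl, rfl⟩ := h
        exact ⟨[], t, rfl⟩
      · obtain ⟨l₁, l₂, hl⟩ := eq_of_mem_zip_tail (l := b :: t) h
        exact ⟨a :: l₁, l₂, by rw [List.cons_append, hl]⟩

lemma head?_append_cons (l₁ : List V) (x : V) (l l' : List V) :
    (l₁ ++ x :: l).head? = (l₁ ++ x :: l').head? := by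
  cases l₁ <;> simp

lemma distSet_nonneg {E : V → V → Prop} {w : V → V → ℝ} (hw : ∀ u v, 0 ≤ w u v)
    (v0 v : V) :
    ∀ c ∈ { c | ∃ π, IsPathFrom E v0 π ∧ π.getLast? = some v ∧ pathWeight w π = c },
      (0:ℝ) ≤ c := by
  rintro c ⟨π, _, _, rfl⟩
  exact pw_nonneg w hw π

lemma distSet_bddBelow {E : V → V → Prop} {w : V → V → ℝ} (hw : ∀ u v, 0 ≤ w u v)
    (v0 v : V) :
    BddBelow { c | ∃ π, IsPathFrom E v0 π ∧ π.getLast? = some v ∧ pathWeight w π = c } :=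
  ⟨0, distSet_nonneg hw v0 v⟩

lemma dist_le {E : V → V → Prop} {w : V → V → ℝ} (hw : ∀ u v, 0 ≤ w u v)
    {v0 v : V} {π : List V} (hπ : IsPathFrom E v0 π) (hlast : π.getLast? = some v) :
    dist E w v0 v ≤ pathWeight w π :=
  csInf_le (distSet_bddBelow hw v0 v) ⟨π, hπ, hlast, rfl⟩

/-- The key lemma: an edge in `E_SP` is "tight". -/
lemma key {E : V → V → Prop} {w : V → V → ℝ} (hw : ∀ u v, 0 ≤ w u v)
    {v0 : V} {F : Set V} {u v : V} (h : InESP E w v0 F u v) :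
    dist E w v0 u + w u v ≤ dist E w v0 v := by
  obtain ⟨σ, vf, ⟨hhead, hchain⟩, hlast, -, hWeq, hmem⟩ := h
  obtain ⟨l₁, l₂, rfl⟩ := eq_of_mem_zip_tail hmem
  -- pieces of σ
  have hσ1 : l₁ ++ u :: v :: l₂ = (l₁ ++ [u]) ++ v :: l₂ := by simp
  have hσ2 : l₁ ++ u :: v :: l₂ = (l₁ ++ [u, v]) ++ l₂ := by simp
  have hchain1 : (l₁ ++ [u]).Chain' E ∧ (v :: l₂).Chain' E := by
    rw [hσ1, List.Chain', List.isChain_append] at hchain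
    exact ⟨hchain.1, hchain.2.1⟩
  have hchain2 : (l₁ ++ [u, v]).Chain' E := by
    rw [hσ2, List.Chain', List.isChain_append] at hchain
    exact hchain.1
  have hhead1 : (l₁ ++ [u]).head? = some v0 := by
    rw [head?_append_cons l₁ u [] (v :: l₂)]; exact hhead
  have hhead2 : (l₁ ++ [u, v]).head? = some v0 := by
    rw [head?_append_cons l₁ u [v] (v :: l₂)]; exact hhead
  have hpath1 : IsPathFrom E v0 (l₁ ++ [u]) := ⟨hhead1, hchain1.1⟩
  have hpath2 : IsPathFrom E v0 (l₁ ++ [u, v]) := ⟨hhead2, hchain2⟩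
  have hlast1 : (l₁ ++ [u]).getLast? = some u := List.getLast?_concat
  have hlast2 : (l₁ ++ [u, v]).getLast? = some v := by
    rw [show l₁ ++ [u, v] = (l₁ ++ [u]) ++ [v] by simp, List.getLast?_concat]
  -- weight decomposition
  set A := pathWeight w (l₁ ++ [u]) with hA
  set K := pathWeight w (v :: l₂) with hK
  have hWσ : pathWeight w (l₁ ++ u :: v :: l₂) = A + w u v + K := by
    rw [pw_split w l₁ u (v :: l₂), pw_cons]; ring
  -- dist v0 u ≤ A
  have hdu : dist E w v0 u ≤ A := dist_le hw hpath1 hlast1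
  -- dist v0 vf ≤ dist v0 v + K  (splice any path to v with the tail v :: l₂)
  have hsplice : ∀ c ∈ { c | ∃ π, IsPathFrom E v0 π ∧ π.getLast? = some v ∧
      pathWeight w π = c }, dist E w v0 vf ≤ c + K := by
    rintro c ⟨τ, ⟨hth, htc⟩, htl, rfl⟩
    have hτne : τ ≠ [] := by rintro rfl; simp at htl
    have hvlast : τ.getLast hτne = v := by
      rw [List.getLast?_eq_getLast hτne] at htl
      exact Option.some.inj htl
    have hτeq : τ.dropLast ++ [v] = τ := by rw [← hvlast]; exact List.dropLast_append_getLast hτne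
    refine csInf_le (distSet_bddBelow hw v0 vf) ⟨τ.dropLast ++ v :: l₂, ⟨?_, ?_⟩, ?_, ?_⟩
    · rw [head?_append_cons τ.dropLast v l₂ []]
      rw [hτeq]; exact hth
    · rw [← hτeq] at htc
      rw [List.Chain', List.isChain_append] at htc ⊢
      exact ⟨htc.1, hchain1.2, fun x hx y hy => htc.2.2 x hx y (by simpa using hy)⟩
    · rw [List.getLast?_append_of_ne_nil _ (by simp : v :: l₂ ≠ [])]
      rw [hσ1, List.getLast?_append_of_ne_nil _ (by simp : v :: l₂ ≠ [])] at hlast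
      exact hlast
    · rw [pw_split w τ.dropLast v l₂, hτeq]
  have hne : { c | ∃ π, IsPathFrom E v0 π ∧ π.getLast? = some v ∧
      pathWeight w π = c }.Nonempty := ⟨_, ⟨l₁ ++ [u, v], hpath2, hlast2, rfl⟩⟩
  have hdvf : dist E w v0 vf ≤ dist E w v0 v + K := by
    have h1 : dist E w v0 vf - K ≤ dist E w v0 v := by
      apply le_csInf hne
      intro c hc
      linarith [hsplice c hc]
    linarith
  have : A + w u v + K = dist E w v0 vf := by rw [← hWσ, hWeq]
  linarith

lemma dist_self {E : V → V → Prop} {w : V → V → ℝ} (hw : ∀ u v, 0 ≤ w u v) (v0 : V) :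
    dist E w v0 v0 = 0 := by
  have h0 : (0:ℝ) ∈ { c | ∃ π, IsPathFrom E v0 π ∧ π.getLast? = some v0 ∧
      pathWeight w π = c } := ⟨[v0], ⟨rfl, List.isChain_singleton v0⟩, rfl, pw_single w v0⟩
  exact le_antisymm (csInf_le (distSet_bddBelow hw v0 v0) h0)
    (le_csInf ⟨0, h0⟩ (distSet_nonneg hw v0 v0))

lemma edge_subset_append {l l' : List V} {p : V × V} (h : p ∈ l.zip l.tail) :
    p ∈ (l ++ l').zip (l ++ l').tail := by
  obtain ⟨u, v⟩ := p
  obtain ⟨l₁, l₂, rfl⟩ := eq_of_mem_zip_tail h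
  have : (l₁ ++ u :: v :: l₂) ++ l' = l₁ ++ u :: v :: (l₂ ++ l') := by simp
  rw [this]
  exact mem_zip_tail_of_eq u v l₁ (l₂ ++ l')

/-- a directed path starting at `v0` all of whose edges lie in
`E_SP` has total weight equal to the distance from `v0` to its last vertex. -/
theorem path_of_shortest_edges_is_shortest
    [Fintype V] (E : V → V → Prop) (w : V → V → ℝ)
    (hw : ∀ u v, 0 ≤ w u v)
    (v0 : V) (F : Set V)
    (π : List V) (hπ : IsPathFrom E v0 π)
    (hSP : ∀ p ∈ π.zip π.tail, InESP E w v0 F p.1 p.2)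
    (vl : V) (hl : π.getLast? = some vl) :
    pathWeight w π = dist E w v0 vl := by
  induction π using List.reverseRecOn generalizing vl with
  | nil => simp at hl
  | append_singleton ρ x ih =>
      have hx : x = vl := by
        rw [List.getLast?_concat] at hl; exact Option.some.inj hl
      subst hx
      rcases eq_or_ne ρ [] with rfl | hρne
      · -- π = [x], so x = v0
        have hx0 : x = v0 := by
          have := hπ.1; simp at this; exact this
        subst hx0
        simp only [List.nil_append]
        rw [pw_single, dist_self hw]
      · -- ρ nonempty, peel the last edge
        set u := ρ.getLast hρne with hu
        have hρeq : ρ.dropLast ++ [u] = ρ := List.dropLast_append_getLast hρne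
        have hπeq : ρ ++ [x] = ρ.dropLast ++ u :: x :: [] := by
          rw [← hρeq]; simp
        -- ρ is a path from v0
        have hρhead : ρ.head? = some v0 := by
          have h := hπ.1
          rw [← hρeq, List.append_assoc] at h
          simp only [List.singleton_append] at h
          rw [← hρeq]
          rw [head?_append_cons ρ.dropLast u [x] []] at h
          simpa using h
        have hρchain : ρ.Chain' E := (List.isChain_append.mp hπ.2).1
        have hρpath : IsPathFrom E v0 ρ := ⟨hρhead, hρchain⟩
        have hρlast : ρ.getLast? = some u := List.getLast?_eq_getLast hρne
        have hSPρ : ∀ p ∈ ρ.zip ρ.tail, InESP E w v0 F p.1 p.2 :=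
          fun p hp => hSP p (edge_subset_append hp)
        have IH : pathWeight w ρ = dist E w v0 u := ih hρpath hSPρ u hρlast
        -- the last edge is in E_SP
        have hedge : InESP E w v0 F u x := by
          apply hSP (u, x)
          rw [hπeq]
          exact mem_zip_tail_of_eq u x ρ.dropLast []
        -- weight decomposition
        have hWπ : pathWeight w (ρ ++ [x]) = pathWeight w ρ + w u x := by
          conv_lhs => rw [hπeq]
          rw [pw_split w ρ.dropLast u [x], pw_cons, pw_single]
          conv_rhs => rw [← hρeq]
          ring
        have h1 : dist E w v0 u + w u x ≤ dist E w v0 x := key hw hedge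
        have h2 : dist E w v0 x ≤ pathWeight w (ρ ++ [x]) :=
          dist_le hw hπ (List.getLast?_concat (l := ρ))
        rw [hWπ, IH]
        linarith

end ShortestPathEdges
end

section
/- Let σ_a ∈ 𝔖_a be a winning agent strategy on the knowledge-based game arena G, let σ_e ∈ 𝔖_e be an environment strategy, and let K be the knowledge-set component of last(π_{σ_a,σ_e}). Then for every compatible environment T ∈ 𝕋_K (i.e., every T ∈ 𝕋 with δ_T(x) = o_K(x) for all x ∈ X(K)), the outcome plays coincide: π_{σ_a,σ_e^T} = π_{σ_a,σ_e}. -/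
namespace RegretLTL

variable {X Q AP : Type} [DecidableEq X] [Fintype X] [Fintype Q] [Fintype AP]
  [Inhabited X] [Inhabited Q]

variable (M : PKWTS X AP) (D : DFAut Q AP) (K0 : List (X × Finset X))

lemma vtx_cases (v : Vtx X Q) : IsAgV v ∨ IsEnvV v := by
  cases v <;> simp [IsAgV, IsEnvV]

lemma mem_kupdate {K : List (X × Finset X)} {κ p : X × Finset X} (hp : p ∈ K) :
    p ∈ kupdate K κ := by
  unfold kupdate; split
  · exact hp
  · exact List.mem_append_left _ hp

lemma edge_kof_mono {u v : Vtx X Q} (h : Edge M D u v) {p : X × Finset X}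
    (hp : p ∈ Kof u) : p ∈ Kof v := by
  cases u with
  | ag x q K =>
    cases v with
    | ag => simp [Edge] at h
    | env x' q' K' xh =>
      obtain ⟨_, _, hK, _⟩ := h
      simpa [Kof, hK] using hp
  | env xe qe Ke xh =>
    cases v with
    | ag xa qa Ka =>
      obtain ⟨_, _, o, _, hKa⟩ := h
      simp only [Kof] at hp ⊢
      rw [hKa]; exact mem_kupdate hp
    | env => simp [Edge] at h

lemma getLast!_eq_getElem {l : List (Vtx X Q)} (h : l ≠ []) :
    l.getLast! = l[l.length-1]'(by have := List.length_pos_iff.mpr h; omega) := by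
  apply List.getLast!_of_getLast?
  rw [List.getLast?_eq_getLast_of_ne_nil h, List.getLast_eq_getElem]

lemma mem_kof_getLast {π : List (Vtx X Q)} (hch : π.Chain' (Edge M D)) {i : ℕ}
    (hi : i < π.length) {p : X × Finset X} (hp : p ∈ Kof (π[i]'hi)) :
    p ∈ Kof π.getLast! := by
  have key : ∀ j, i ≤ j → ∀ (hj : j < π.length), p ∈ Kof (π[j]'hj) := by
    intro j hij
    induction j with
    | zero =>
      intro hj
      have : i = 0 := Nat.le_zero.mp hij
      subst this; exact hp
    | succ m ih =>
      intro hj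
      rcases Nat.lt_or_ge i (m+1) with hlt | hge
      · have hm : m < π.length := by omega
        have hedge : Edge M D (π[m]'hm) (π[m+1]'hj) :=
          List.isChain_iff_getElem.mp hch m (by omega)
        exact edge_kof_mono M D hedge (ih (by omega) hm)
      · have : i = m + 1 := by omega
        subst this; exact hp
  have hne : π ≠ [] := by intro hnil; subst hnil; exact absurd hi (by simp)
  rw [getLast!_eq_getElem hne]
  exact key _ (by omega) _

lemma play_ne_nil {π : List (Vtx X Q)} (h : IsPlay M D K0 π) : π ≠ [] := by
  intro hnil; subst hnil; simp [IsPlay] at h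

lemma play_getElem_zero {π : List (Vtx X Q)} (h : IsPlay M D K0 π)
    (h0 : 0 < π.length) : π[0]'h0 = v0 M D K0 := by
  cases π with
  | nil => simp at h0
  | cons a l => simpa [IsPlay] using h.1

lemma outcome_take_eq {σa : List (Vtx X Q) → Option (Vtx X Q)}
    {σe : Vtx X Q → Vtx X Q} {π π' : List (Vtx X Q)}
    (h : IsOutcome M D K0 σa σe π) (h' : IsOutcome M D K0 σa σe π') :
    ∀ n, n ≤ π.length → n ≤ π'.length → π.take n = π'.take n := by
  intro n
  induction n with
  | zero => simp
  | succ m ih =>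
    intro hn hn'
    have hm : m < π.length := by omega
    have hm' : m < π'.length := by omega
    have htake : π.take m = π'.take m := ih (by omega) (by omega)
    have helem : π[m]'hm = π'[m]'hm' := by
      cases m with
      | zero =>
        rw [play_getElem_zero M D K0 h.1, play_getElem_zero M D K0 h'.1]
      | succ k =>
        have hk : k < π.length := by omega
        have hk' : k < π'.length := by omega
        have hkeq : π[k]'hk = π'[k]'hk' := by
          have hc := congrArg (fun l => l[k]?) htake
          simp only [List.getElem?_take_of_lt (Nat.lt_succ_self k)] at hc
          rw [List.getElem?_eq_getElem hk, List.getElem?_eq_getElem hk'] at hc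
          exact Option.some.inj hc
        rcases vtx_cases (π[k]'hk) with hag | henv
        · have e1 := (h.2.1 k hm).1 hag
          have e2 := (h'.2.1 k hm').1 (hkeq ▸ hag)
          rw [htake] at e1
          rw [e1] at e2
          exact Option.some.inj e2
        · have e1 := (h.2.1 k hm).2 henv
          have e2 := (h'.2.1 k hm').2 (hkeq ▸ henv)
          rw [← e1, ← e2, hkeq]
    apply List.ext_getElem
    · simp; omega
    · intro i h1 h2
      simp only [List.getElem_take]
      have hi : i < m + 1 := by simp at h1; omega
      rcases Nat.lt_or_ge i m with hlt | hge
      · have := congrArg (fun l => l[i]?) htake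
        simp only [List.getElem?_take_of_lt hlt] at this
        have g1 : i < π.length := by omega
        have g2 : i < π'.length := by omega
        rw [List.getElem?_eq_getElem g1, List.getElem?_eq_getElem g2] at this
        exact Option.some.inj this
      · have : i = m := by omega
        subst this; exact helem

lemma outcome_len_le {σa : List (Vtx X Q) → Option (Vtx X Q)}
    {σe : Vtx X Q → Vtx X Q} {π π' : List (Vtx X Q)}
    (h : IsOutcome M D K0 σa σe π) (h' : IsOutcome M D K0 σa σe π') :
    π'.length ≤ π.length := by
  by_contra hlt
  push_neg at hlt
  set n := π.length with hn
  have hne : π ≠ [] := play_ne_nil M D K0 h.1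
  have hpos : 0 < n := List.length_pos_iff.mpr hne
  have htake : π.take n = π'.take n :=
    outcome_take_eq M D K0 h h' n (le_refl _) (by omega)
  have hπ : π = π'.take n := by rw [← htake, List.take_length]
  have hm : n - 1 + 1 < π'.length := by omega
  have hlast' : π[n-1]'(by omega) = π'[n-1]'(by omega) := by
    have hc := congrArg (fun l => l[n-1]?) htake
    simp only [List.getElem?_take_of_lt (by omega : n - 1 < n)] at hc
    rw [List.getElem?_eq_getElem (by omega : n - 1 < π.length),
      List.getElem?_eq_getElem (by omega : n - 1 < π'.length)] at hc
    exact Option.some.inj hc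
  have hlastag : IsAgV (π'[n-1]'(by omega)) := by
    rw [← hlast']
    have h3 := h.2.2.1
    rw [getLast!_eq_getElem hne] at h3
    exact h3
  have hstep := (h'.2.1 (n-1) (by omega)).1 hlastag
  have htk : π'.take (n-1+1) = π := by
    rw [show n - 1 + 1 = n by omega, ← hπ]
  rw [htk, h.2.2.2] at hstep
  exact absurd hstep (by simp)

lemma outcome_unique {σa : List (Vtx X Q) → Option (Vtx X Q)}
    {σe : Vtx X Q → Vtx X Q} {π π' : List (Vtx X Q)}
    (h : IsOutcome M D K0 σa σe π) (h' : IsOutcome M D K0 σa σe π') :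
    π = π' := by
  have hlen : π.length = π'.length :=
    le_antisymm (outcome_len_le M D K0 h' h) (outcome_len_le M D K0 h h')
  have := outcome_take_eq M D K0 h h' π.length (le_refl _) (by omega)
  rwa [List.take_length, hlen, List.take_length] at this

/-- if `T` is compatible with the knowledge-set gathered along the
outcome play of `σa` against `σe`, then `σa` produces the same outcome play
against `σ_e^T` as against `σe`. -/
theorem outcome_determined_by_gathered_knowledge
    (hinit : IsInitK M K0)
    (σa : List (Vtx X Q) → Option (Vtx X Q)) (hσa : σa ∈ SA M D K0)
    (σe : Vtx X Q → Vtx X Q) (hσe : σe ∈ SE M D)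
    (T : CompatEnv M)
    (hT : InTK M (Kof ((outcome M D K0 σa σe).getLast!)) T) :
    outcome M D K0 σa (envOf M D T) = outcome M D K0 σa σe := by
  have hex : ∃ π, IsOutcome M D K0 σa σe π := by
    obtain ⟨π, hπ, _⟩ := hσa.2 σe hσe
    exact ⟨π, hπ⟩
  have hout : IsOutcome M D K0 σa σe (outcome M D K0 σa σe) := by
    rw [outcome, dif_pos hex]
    exact hex.choose_spec
  set π := outcome M D K0 σa σe with hπdef
  have hT2 : IsOutcome M D K0 σa (envOf M D T) π := by
    refine ⟨hout.1, ?_, hout.2.2⟩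
    intro i hlt
    refine ⟨(hout.2.1 i hlt).1, ?_⟩
    intro hEnv
    have hi2 : i < π.length := Nat.lt_of_succ_lt hlt
    have hedge : Edge M D (π[i]'hi2) (π[i+1]'hlt) :=
      List.isChain_iff_getElem.mp hout.1.2 i (by omega)
    rcases hv : π[i]'hi2 with ⟨x, q, K⟩ | ⟨x, q, K, xh⟩
    · rw [hv] at hEnv; exact absurd hEnv (by simp [IsEnvV])
    rcases hv2 : π[i+1]'hlt with ⟨xa, qa, Ka⟩ | ⟨xa, qa, Ka, xa2⟩
    swap
    · rw [hv, hv2] at hedge; simp [Edge] at hedge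
    rw [hv, hv2] at hedge
    obtain ⟨hxa, hqa, o, ho, hKa⟩ := hedge
    simp only [envOf, Vtx.ag.injEq]
    refine ⟨hxa.symm, hqa.symm, ?_⟩
    subst hxa
    unfold kupdate at hKa ⊢
    by_cases hany : K.any (fun k => decide (k.1 = xa)) = true
    · simp only [hany, if_true] at hKa ⊢
      exact hKa.symm
    · simp only [hany, if_false, Bool.false_eq_true, reduceIte] at hKa ⊢
      have hmem : (xa, o) ∈ Ka := by
        rw [hKa]; exact List.mem_append_right _ (List.mem_singleton.mpr rfl)
      have hmem2 : (xa, o) ∈ Kof (π[i+1]'hlt) := by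
        rw [hv2]; exact hmem
      have hlast : (xa, o) ∈ Kof π.getLast! :=
        mem_kof_getLast M D hout.1.2 hlt hmem2
      have := hT _ hlast
      rw [hKa, this]
  have hex2 : ∃ π2, IsOutcome M D K0 σa (envOf M D T) π2 := ⟨π, hT2⟩
  rw [outcome, dif_pos hex2]
  exact outcome_unique M D K0 hex2.choose_spec hT2

end RegretLTL
end
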